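/- Let 1 ≤ p < 2 < q ≤ ∞ and 0 < θ < 1 satisfy θ/p + (1-θ)/q = 1/2. There exists C > 0 such that if w ∈ L^p(ℝ²) ∩ L^q(ℝ²) and v is defined by the Biot-Savart law v(ξ) = (1/2π) ∫_{ℝ²} (ξ-η)^⊥ / |ξ-η|² · w(η) dη, then v ∈ L^∞(ℝ²) and ‖v‖_∞ ≤ C ‖w‖_p^θ ‖w‖_q^{1-θ}. -/

import Mathlib

/-!
Split the Biot–Savart integral at distance `R` from `ξ`; since `|K_BS(z)| = 1 / (2π |z|)`,
Hölder's inequality bounds the near part by `‖w‖_q ‖|·|⁻¹‖_{L^{q'}(B_R)}` and the far part by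
`‖w‖_p ‖|·|⁻¹‖_{L^{p'}(B_Rᶜ)}`. In polar coordinates these kernel norms are finite exactly because
`q' < 2 < p'`, and equal to constants times `R^{1 - 2/q}` and `R^{1 - 2/p}`. Choosing `R` to balance
the two terms makes each of them `‖w‖_p^θ ‖w‖_q^{1-θ}`, by `θ/p + (1-θ)/q = 1/2`.
-/

open Real MeasureTheory
open scoped ENNReal

noncomputable section

abbrev E2 := EuclideanSpace ℝ (Fin 2)

def perp (x : E2) : E2 := (EuclideanSpace.equiv (Fin 2) ℝ).symm ![-(x 1), x 0]

open Metric Set Module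

namespace ENNReal

theorem two_lt_iff_toReal_inv_lt {r : ℝ≥0∞} (hr : r ≠ 0) : 2 < r ↔ (r⁻¹).toReal < 2⁻¹ := by
  rw [← ENNReal.inv_lt_inv, ← toReal_lt_toReal (inv_ne_top.2 hr) (by simp), toReal_inv 2]
  simp

theorem lt_two_iff_lt_toReal_inv {r : ℝ≥0∞} (hr : r ≠ 0) : r < 2 ↔ 2⁻¹ < (r⁻¹).toReal := by
  rw [← ENNReal.inv_lt_inv, ← toReal_lt_toReal (by simp) (inv_ne_top.2 hr), toReal_inv 2]
  simp

theorem HolderConjugate.toReal_inv_add_toReal_inv (p q : ℝ≥0∞) [HolderConjugate p q] :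
    (p⁻¹).toReal + (q⁻¹).toReal = 1 := by
  rw [← toReal_add (inv_ne_top.2 (HolderConjugate.ne_zero p q))
    (inv_ne_top.2 (HolderConjugate.ne_zero q p)), HolderConjugate.inv_add_inv_eq_one, toReal_one]

end ENNReal

theorem exists_mul_rpow_eq_mul_rpow {x y α γ θ : ℝ} (hx : 0 < x) (hy : 0 < y) (hγα : γ < α)
    (hθ : α = θ * (α - γ)) :
    ∃ R > 0, x * R ^ α = y ^ θ * x ^ (1 - θ) ∧ y * R ^ γ = y ^ θ * x ^ (1 - θ) := by
  have hyx : 0 < y / x := div_pos hy hx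
  have hαγ : α - γ ≠ 0 := sub_ne_zero.2 hγα.ne'
  have hx1 : x ^ (1 - θ) = x / x ^ θ := by rw [rpow_sub hx, rpow_one]
  refine ⟨(y / x) ^ (α - γ)⁻¹, rpow_pos_of_pos hyx _, ?_, ?_⟩
  · rw [← rpow_mul hyx.le, show (α - γ)⁻¹ * α = θ by field_simp; linarith,
      div_rpow hy.le hx.le, hx1]
    field_simp
  · rw [← rpow_mul hyx.le, show (α - γ)⁻¹ * γ = θ - 1 by field_simp; linarith,
      div_rpow hy.le hx.le, rpow_sub_one hy.ne', rpow_sub_one hx.ne', hx1]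
    field_simp

theorem le_ofReal_add_mul_rpow_mul_rpow {V X Y : ℝ≥0∞} {A B α γ θ : ℝ} (hX0 : X ≠ 0)
    (hXt : X ≠ ∞) (hY0 : Y ≠ 0) (hYt : Y ≠ ∞) (hA : 0 ≤ A) (hB : 0 ≤ B) (hγα : γ < α)
    (hθ : α = θ * (α - γ))
    (h : ∀ R : ℝ, 0 < R → V ≤ X * ENNReal.ofReal (A * R ^ α) + Y * ENNReal.ofReal (B * R ^ γ)) :
    V ≤ ENNReal.ofReal (A + B) * Y ^ θ * X ^ (1 - θ) := by
  obtain ⟨x, hx, rfl⟩ : ∃ x : ℝ, 0 < x ∧ ENNReal.ofReal x = X :=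
    ⟨X.toReal, ENNReal.toReal_pos hX0 hXt, ENNReal.ofReal_toReal hXt⟩
  obtain ⟨y, hy, rfl⟩ : ∃ y : ℝ, 0 < y ∧ ENNReal.ofReal y = Y :=
    ⟨Y.toReal, ENNReal.toReal_pos hY0 hYt, ENNReal.ofReal_toReal hYt⟩
  obtain ⟨R, hR, hxR, hyR⟩ := exists_mul_rpow_eq_mul_rpow hx hy hγα hθ
  refine (h R hR).trans_eq ?_
  rw [← ENNReal.ofReal_mul hx.le, ← ENNReal.ofReal_mul hy.le, ← ENNReal.ofReal_add
    (by positivity) (by positivity), ENNReal.ofReal_rpow_of_pos hy, ENNReal.ofReal_rpow_of_pos hx,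
    ← ENNReal.ofReal_mul (by positivity), ← ENNReal.ofReal_mul (by positivity)]
  congr 1
  linear_combination A * hxR + B * hyR

theorem measureReal_ball_pos {E : Type*} [NormedAddCommGroup E] [NormedSpace ℝ E]
    [FiniteDimensional ℝ E] [MeasurableSpace E] (μ : Measure E) [μ.IsAddHaarMeasure] (x : E)
    {r : ℝ} (hr : 0 < r) : 0 < μ.real (ball x r) :=
  ENNReal.toReal_pos (measure_ball_pos μ x hr).ne' measure_ball_lt_top.ne

theorem eLpNorm_inv_norm_eq_of_lintegral_rpow_neg {E : Type*} [NormedAddCommGroup E]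
    [MeasurableSpace E] {ν : Measure E} {s : ℝ≥0∞} (hs0 : s ≠ 0) (hs : s ≠ ∞) {K R d : ℝ}
    (hK : 0 ≤ K) (hR : 0 < R)
    (h : ∫⁻ x, ENNReal.ofReal (‖x‖ ^ (-s.toReal)) ∂ν = ENNReal.ofReal (K * R ^ (d - s.toReal))) :
    eLpNorm (fun x : E ↦ ‖x‖⁻¹) s ν =
      ENNReal.ofReal (K ^ (1 / s.toReal) * R ^ (d * (s⁻¹).toReal - 1)) := by
  have hspos : 0 < s.toReal := ENNReal.toReal_pos hs0 hs
  have hpow (x : E) : ‖‖x‖⁻¹‖ₑ ^ s.toReal = ENNReal.ofReal (‖x‖ ^ (-s.toReal)) := by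
    rw [Real.enorm_of_nonneg (inv_nonneg.2 (norm_nonneg x)), ENNReal.ofReal_rpow_of_nonneg
      (inv_nonneg.2 (norm_nonneg x)) hspos.le, inv_rpow (norm_nonneg x), rpow_neg (norm_nonneg x)]
  rw [eLpNorm_eq_lintegral_rpow_enorm_toReal hs0 hs, lintegral_congr hpow, h,
    ENNReal.ofReal_rpow_of_nonneg (by positivity) (by positivity),
    mul_rpow hK (by positivity), ← rpow_mul hR.le, ENNReal.toReal_inv]
  congr 3
  field_simp

section Radial
variable {E : Type*} [NormedAddCommGroup E] [NormedSpace ℝ E] [FiniteDimensional ℝ E]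
  [MeasurableSpace E] [BorelSpace E] [Nontrivial E] (μ : Measure E) [μ.IsAddHaarMeasure]

theorem lintegral_ofReal_fun_norm_addHaar {f : ℝ → ℝ} (hf : ∀ y, 0 ≤ y → 0 ≤ f y)
    (hint : IntegrableOn (fun y ↦ y ^ (finrank ℝ E - 1) * f y) (Ioi 0)) :
    ∫⁻ x, ENNReal.ofReal (f ‖x‖) ∂μ =
      ENNReal.ofReal (finrank ℝ E * μ.real (ball 0 1) *
        ∫ y in Ioi (0 : ℝ), y ^ (finrank ℝ E - 1) * f y) := by
  rw [← ofReal_integral_eq_lintegral_ofReal ((integrable_fun_norm_addHaar μ).2 hint)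
    (.of_forall fun x ↦ hf _ (norm_nonneg x)), integral_fun_norm_addHaar]
  simp only [smul_eq_mul, nsmul_eq_mul, mul_assoc]

theorem setLIntegral_ofReal_rpow_neg_norm_addHaar {a : ℝ} {S : Set ℝ} (hS : MeasurableSet S)
    (hint : IntegrableOn (fun y : ℝ ↦ y ^ ((finrank ℝ E : ℝ) - 1 - a)) (Ioi 0 ∩ S)) :
    ∫⁻ x in norm ⁻¹' S, ENNReal.ofReal (‖x‖ ^ (-a)) ∂μ =
      ENNReal.ofReal (finrank ℝ E * μ.real (ball 0 1) *
        ∫ y in Ioi 0 ∩ S, y ^ ((finrank ℝ E : ℝ) - 1 - a)) := by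
  have hd : 1 ≤ finrank ℝ E := finrank_pos
  have hpow : EqOn (fun y : ℝ ↦ y ^ (finrank ℝ E - 1) * S.indicator (· ^ (-a)) y)
      (S.indicator fun y ↦ y ^ ((finrank ℝ E : ℝ) - 1 - a)) (Ioi 0) := fun y hy ↦ by
    by_cases hyS : y ∈ S
    · simp only [indicator_of_mem hyS]
      rw [← rpow_natCast, ← rpow_add hy, Nat.cast_sub hd, Nat.cast_one, sub_eq_add_neg (_ - 1)]
    · simp [hyS]
  rw [← lintegral_indicator (hS.preimage measurable_norm)]
  have hind : (norm ⁻¹' S).indicator (fun x : E ↦ ENNReal.ofReal (‖x‖ ^ (-a))) =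
      fun x ↦ ENNReal.ofReal (S.indicator (· ^ (-a)) ‖x‖) := by
    ext x
    by_cases hx : ‖x‖ ∈ S <;> simp [indicator, hx]
  rw [hind, lintegral_ofReal_fun_norm_addHaar μ, setIntegral_congr_fun measurableSet_Ioi hpow,
    setIntegral_indicator hS]
  · intro y hy
    by_cases hyS : y ∈ S <;> simp [indicator, hyS, rpow_nonneg hy]
  · rw [integrableOn_congr_fun hpow measurableSet_Ioi, IntegrableOn, integrable_indicator_iff hS]
    simpa [IntegrableOn, Measure.restrict_restrict hS, inter_comm] using hint

theorem lintegral_ball_norm_rpow_neg {a R : ℝ} (ha : a < finrank ℝ E) (hR : 0 < R) :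
    ∫⁻ x in ball (0 : E) R, ENNReal.ofReal (‖x‖ ^ (-a)) ∂μ =
      ENNReal.ofReal (finrank ℝ E * μ.real (ball 0 1) / (finrank ℝ E - a) *
        R ^ ((finrank ℝ E : ℝ) - a)) := by
  have hball : ball (0 : E) R = norm ⁻¹' Iio R := by ext; simp
  have hexp : -1 < (finrank ℝ E : ℝ) - 1 - a := by linarith
  rw [hball, setLIntegral_ofReal_rpow_neg_norm_addHaar μ measurableSet_Iio, Ioi_inter_Iio,
    ← integral_Ioc_eq_integral_Ioo, ← intervalIntegral.integral_of_le hR.le,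
    integral_rpow (.inl hexp)]
  · simp [zero_rpow (by linarith : (finrank ℝ E : ℝ) - 1 - a + 1 ≠ 0)]
    ring_nf
  · rw [Ioi_inter_Iio]
    exact (intervalIntegral.integrableOn_Ioo_rpow_iff hR).2 hexp

theorem lintegral_compl_ball_norm_rpow_neg {a R : ℝ} (ha : finrank ℝ E < a) (hR : 0 < R) :
    ∫⁻ x in (ball (0 : E) R)ᶜ, ENNReal.ofReal (‖x‖ ^ (-a)) ∂μ =
      ENNReal.ofReal (finrank ℝ E * μ.real (ball 0 1) / (a - finrank ℝ E) *
        R ^ ((finrank ℝ E : ℝ) - a)) := by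
  have hball : (ball (0 : E) R)ᶜ = norm ⁻¹' Ici R := by ext; simp
  have hexp : (finrank ℝ E : ℝ) - 1 - a < -1 := by linarith
  have hinter : Ioi 0 ∩ Ici R = Ici R := inter_eq_right.2 (Ici_subset_Ioi.2 hR)
  rw [hball, setLIntegral_ofReal_rpow_neg_norm_addHaar μ measurableSet_Ici, hinter,
    integral_Ici_eq_integral_Ioi, integral_Ioi_rpow_of_lt hexp hR]
  · rw [show (finrank ℝ E : ℝ) - 1 - a + 1 = -(a - finrank ℝ E) by ring, div_neg, neg_div,
      neg_neg, neg_sub]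
    ring_nf
  · rw [hinter]
    exact (integrableOn_Ioi_rpow_of_lt hexp hR).congr_set_ae Ioi_ae_eq_Ici.symm

theorem exists_eLpNorm_inv_norm_restrict_ball_le {s : ℝ≥0∞} (hs0 : s ≠ 0)
    (hs : s < finrank ℝ E) :
    ∃ C : ℝ, 0 < C ∧ ∀ R : ℝ, 0 < R → eLpNorm (fun x : E ↦ ‖x‖⁻¹) s (μ.restrict (ball 0 R)) ≤
      ENNReal.ofReal (C * R ^ (finrank ℝ E * (s⁻¹).toReal - 1)) := by
  have hst : s ≠ ∞ := ne_top_of_lt hs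
  have hs' : s.toReal < finrank ℝ E := by
    simpa using (ENNReal.toReal_lt_toReal hst (by simp)).2 hs
  have hd : (0 : ℝ) < finrank ℝ E - s.toReal := by linarith
  have := measureReal_ball_pos μ 0 one_pos
  have : (0 : ℝ) < finrank ℝ E := mod_cast finrank_pos
  exact ⟨_, by positivity, fun R hR ↦ (eLpNorm_inv_norm_eq_of_lintegral_rpow_neg hs0 hst
    (by positivity) hR (lintegral_ball_norm_rpow_neg μ hs' hR)).le⟩

theorem exists_eLpNorm_inv_norm_restrict_compl_ball_le {s : ℝ≥0∞} (hs : finrank ℝ E < s) :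
    ∃ C : ℝ, 0 < C ∧ ∀ R : ℝ, 0 < R → eLpNorm (fun x : E ↦ ‖x‖⁻¹) s (μ.restrict (ball 0 R)ᶜ) ≤
      ENNReal.ofReal (C * R ^ (finrank ℝ E * (s⁻¹).toReal - 1)) := by
  rcases eq_or_ne s ∞ with rfl | hst
  · refine ⟨1, one_pos, fun R hR ↦ ?_⟩
    rw [eLpNorm_exponent_top]
    simp only [ENNReal.inv_top, ENNReal.toReal_zero, mul_zero, zero_sub, rpow_neg_one, one_mul]
    refine eLpNormEssSup_le_of_ae_bound ((ae_restrict_iff' measurableSet_ball.compl).2 ?_)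
    refine .of_forall fun x hx ↦ ?_
    rw [norm_inv, norm_norm]
    exact inv_anti₀ hR (by simpa using hx)
  have hs0 : s ≠ 0 := (zero_le.trans_lt hs).ne'
  have hs' : finrank ℝ E < s.toReal := by
    simpa using (ENNReal.toReal_lt_toReal (by simp) hst).2 hs
  have hd : (0 : ℝ) < s.toReal - finrank ℝ E := by linarith
  have := measureReal_ball_pos μ 0 one_pos
  have : (0 : ℝ) < finrank ℝ E := mod_cast finrank_pos
  exact ⟨_, by positivity, fun R hR ↦ (eLpNorm_inv_norm_eq_of_lintegral_rpow_neg hs0 hst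
    (by positivity) hR (lintegral_compl_ball_norm_rpow_neg μ hs' hR)).le⟩

end Radial

theorem lintegral_enorm_mul_le_eLpNorm_mul_eLpNorm {α : Type*} [MeasurableSpace α]
    {μ : Measure α} {p q : ℝ≥0∞} [ENNReal.HolderConjugate p q] {f g : α → ℝ}
    (hf : AEStronglyMeasurable f μ) (hg : AEStronglyMeasurable g μ) :
    ∫⁻ x, ‖f x * g x‖ₑ ∂μ ≤ eLpNorm f p μ * eLpNorm g q μ := by
  have := eLpNorm_le_eLpNorm_mul_eLpNorm'_of_norm (p := p) (q := q) (r := 1) hf hg (· * ·) 1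
    (.of_forall fun x ↦ by simp [norm_mul])
  simpa [eLpNorm_one_eq_lintegral_enorm] using this

section Convolution
variable {E : Type*} [NormedAddCommGroup E] [NormedSpace ℝ E] [FiniteDimensional ℝ E]
  [MeasurableSpace E] [BorelSpace E] {μ : Measure E} [μ.IsAddHaarMeasure]

theorem setLIntegral_preimage_sub_mul_inv_norm_le {r r' : ℝ≥0∞} [ENNReal.HolderConjugate r r']
    {f : E → ℝ} (hf : AEStronglyMeasurable f μ) (ξ : E) {S : Set E} (hS : MeasurableSet S) :
    ∫⁻ η in (ξ - ·) ⁻¹' S, ‖f η * ‖ξ - η‖⁻¹‖ₑ ∂μ ≤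
      eLpNorm f r μ * eLpNorm (fun x : E ↦ ‖x‖⁻¹) r' (μ.restrict S) := by
  have hsub := (Measure.measurePreserving_sub_left μ ξ).restrict_preimage hS
  have hker : AEStronglyMeasurable (fun x : E ↦ ‖x‖⁻¹) (μ.restrict S) :=
    measurable_norm.inv.aestronglyMeasurable
  calc ∫⁻ η in (ξ - ·) ⁻¹' S, ‖f η * ‖ξ - η‖⁻¹‖ₑ ∂μ
      ≤ eLpNorm f r (μ.restrict ((ξ - ·) ⁻¹' S)) *
          eLpNorm (fun η ↦ ‖ξ - η‖⁻¹) r' (μ.restrict ((ξ - ·) ⁻¹' S)) :=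
        lintegral_enorm_mul_le_eLpNorm_mul_eLpNorm hf.restrict (hker.comp_measurePreserving hsub)
    _ ≤ eLpNorm f r μ * eLpNorm (fun x : E ↦ ‖x‖⁻¹) r' (μ.restrict S) := by
        rw [← eLpNorm_comp_measurePreserving (p := r') hker hsub]
        exact mul_le_mul_left (eLpNorm_mono_measure f Measure.restrict_le_self) _

theorem lintegral_mul_inv_norm_sub_le {p p' q q' : ℝ≥0∞} [ENNReal.HolderConjugate p p']
    [ENNReal.HolderConjugate q q'] {f : E → ℝ} (hf : AEStronglyMeasurable f μ) (ξ : E) (R : ℝ) :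
    ∫⁻ η, ‖f η * ‖ξ - η‖⁻¹‖ₑ ∂μ ≤
      eLpNorm f q μ * eLpNorm (fun x : E ↦ ‖x‖⁻¹) q' (μ.restrict (ball 0 R)) +
        eLpNorm f p μ * eLpNorm (fun x : E ↦ ‖x‖⁻¹) p' (μ.restrict (ball 0 R)ᶜ) := by
  rw [← lintegral_add_compl (fun η : E ↦ ‖f η * ‖ξ - η‖⁻¹‖ₑ)
    (measurableSet_ball.preimage (measurable_const.sub measurable_id))]
  exact add_le_add (setLIntegral_preimage_sub_mul_inv_norm_le hf ξ measurableSet_ball)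
    (setLIntegral_preimage_sub_mul_inv_norm_le hf ξ measurableSet_ball.compl)

end Convolution

theorem norm_perp (x : E2) : ‖perp x‖ = ‖x‖ := by
  simp [EuclideanSpace.norm_eq, Fin.sum_univ_two, perp, add_comm]

theorem continuous_perp : Continuous perp := by
  unfold perp; fun_prop

-- Also at `z = 0`, where both sides vanish because `0⁻¹ = 0`.
theorem norm_div_sq_smul_perp (a : ℝ) (z : E2) : ‖(a / ‖z‖ ^ 2) • perp z‖ = ‖a * ‖z‖⁻¹‖ := by
  rw [norm_smul, norm_perp, norm_mul, norm_div, norm_inv, norm_pow, norm_norm]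
  rcases eq_or_ne ‖z‖ 0 with hz | hz
  · simp [hz]
  · field_simp

def biotSavart (w : E2 → ℝ) (ξ : E2) : E2 :=
  (2 * π)⁻¹ • ∫ η, (w η / ‖ξ - η‖ ^ 2) • perp (ξ - η)

theorem biotSavart_congr_ae {w w' : E2 → ℝ} (h : w =ᵐ[volume] w') :
    biotSavart w = biotSavart w' := by
  ext1 ξ
  unfold biotSavart
  congr 1
  refine integral_congr_ae ?_
  filter_upwards [h] with η hη
  rw [hη]

theorem stronglyMeasurable_biotSavart {w : E2 → ℝ} (hw : StronglyMeasurable w) :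
    StronglyMeasurable (biotSavart w) := by
  have hint : StronglyMeasurable fun x : E2 × E2 ↦ (w x.2 / ‖x.1 - x.2‖ ^ 2) • perp (x.1 - x.2) :=
    (((hw.measurable.comp measurable_snd).div (by fun_prop)).smul
      (continuous_perp.measurable.comp (by fun_prop))).stronglyMeasurable
  exact hint.integral_prod_right'.const_smul (2 * π)⁻¹

theorem enorm_biotSavart_le (w : E2 → ℝ) (ξ : E2) :
    ‖biotSavart w ξ‖ₑ ≤ ENNReal.ofReal (2 * π)⁻¹ * ∫⁻ η, ‖w η * ‖ξ - η‖⁻¹‖ₑ := by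
  rw [biotSavart, enorm_smul, Real.enorm_of_nonneg (by positivity)]
  gcongr
  refine (enorm_integral_le_lintegral_enorm _).trans_eq (lintegral_congr fun η ↦ ?_)
  rw [← ofReal_norm, ← ofReal_norm, norm_div_sq_smul_perp]

theorem aestronglyMeasurable_biotSavart {w : E2 → ℝ} (hw : AEStronglyMeasurable w volume) :
    AEStronglyMeasurable (biotSavart w) volume :=
  biotSavart_congr_ae hw.ae_eq_mk ▸
    (stronglyMeasurable_biotSavart hw.stronglyMeasurable_mk).aestronglyMeasurable

theorem exists_lintegral_mul_inv_norm_sub_le {p q : ℝ≥0∞} (hp : 1 ≤ p) (hp2 : p < 2)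
    (hq : 2 < q) :
    ∃ A B : ℝ, 0 < A ∧ 0 < B ∧ ∀ f : E2 → ℝ, AEStronglyMeasurable f volume → ∀ ξ : E2,
      ∀ R : ℝ, 0 < R → ∫⁻ η, ‖f η * ‖ξ - η‖⁻¹‖ₑ ≤
        eLpNorm f q volume * ENNReal.ofReal (A * R ^ (1 - 2 * (q⁻¹).toReal)) +
          eLpNorm f p volume * ENNReal.ofReal (B * R ^ (1 - 2 * (p⁻¹).toReal)) := by
  have : ENNReal.HolderConjugate p p.conjExponent := .conjExponent hp
  have : ENNReal.HolderConjugate q q.conjExponent := .conjExponent (one_le_two.trans hq.le)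
  set p' := p.conjExponent
  set q' := q.conjExponent
  have hp_inv := ENNReal.HolderConjugate.toReal_inv_add_toReal_inv p p'
  have hq_inv := ENNReal.HolderConjugate.toReal_inv_add_toReal_inv q q'
  have hp_half := (ENNReal.lt_two_iff_lt_toReal_inv (ENNReal.HolderConjugate.ne_zero p p')).1 hp2
  have hq_half := (ENNReal.two_lt_iff_toReal_inv_lt (ENNReal.HolderConjugate.ne_zero q q')).1 hq
  have hd : (finrank ℝ E2 : ℝ≥0∞) = 2 := by simp
  have hq' : q' < finrank ℝ E2 := by
    rw [hd, ENNReal.lt_two_iff_lt_toReal_inv (ENNReal.HolderConjugate.ne_zero q' q)]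
    linarith
  have hp' : finrank ℝ E2 < p' := by
    rw [hd, ENNReal.two_lt_iff_toReal_inv_lt (ENNReal.HolderConjugate.ne_zero p' p)]
    linarith
  obtain ⟨A, hA, hnear⟩ :=
    exists_eLpNorm_inv_norm_restrict_ball_le volume (ENNReal.HolderConjugate.ne_zero q' q) hq'
  obtain ⟨B, hB, hfar⟩ := exists_eLpNorm_inv_norm_restrict_compl_ball_le volume hp'
  refine ⟨A, B, hA, hB, fun f hf ξ R hR ↦ ?_⟩
  have hexp_q : (finrank ℝ E2 : ℝ) * (q'⁻¹).toReal - 1 = 1 - 2 * (q⁻¹).toReal := by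
    simp only [finrank_euclideanSpace_fin]
    linarith
  have hexp_p : (finrank ℝ E2 : ℝ) * (p'⁻¹).toReal - 1 = 1 - 2 * (p⁻¹).toReal := by
    simp only [finrank_euclideanSpace_fin]
    linarith
  rw [← hexp_q, ← hexp_p]
  refine (lintegral_mul_inv_norm_sub_le (p := p) (p' := p') (q := q) (q' := q') hf ξ R).trans ?_
  gcongr
  exacts [hnear R hR, hfar R hR]

theorem exists_lintegral_mul_inv_norm_sub_le_rpow_mul_rpow {p q : ℝ≥0∞} {θ : ℝ} (hp : 1 ≤ p)
    (hp2 : p < 2) (hq : 2 < q) (hpqθ : θ * (p⁻¹).toReal + (1 - θ) * (q⁻¹).toReal = 1 / 2) :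
    ∃ K : ℝ, 0 < K ∧ ∀ f : E2 → ℝ, MemLp f p volume → MemLp f q volume → ∀ ξ : E2,
      ∫⁻ η, ‖f η * ‖ξ - η‖⁻¹‖ₑ ≤
        ENNReal.ofReal K * eLpNorm f p volume ^ θ * eLpNorm f q volume ^ (1 - θ) := by
  obtain ⟨A, B, hA, hB, hsplit⟩ := exists_lintegral_mul_inv_norm_sub_le hp hp2 hq
  have hp0 : p ≠ 0 := (zero_lt_one.trans_le hp).ne'
  have hq0 : q ≠ 0 := (zero_le.trans_lt hq).ne'
  have hγα : 1 - 2 * (p⁻¹).toReal < 1 - 2 * (q⁻¹).toReal := by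
    linarith [(ENNReal.lt_two_iff_lt_toReal_inv hp0).1 hp2,
      (ENNReal.two_lt_iff_toReal_inv_lt hq0).1 hq]
  have hθ : 1 - 2 * (q⁻¹).toReal = θ * ((1 - 2 * (q⁻¹).toReal) - (1 - 2 * (p⁻¹).toReal)) := by
    linear_combination (-2) * hpqθ
  refine ⟨A + B, by positivity, fun f hfp hfq ξ ↦ ?_⟩
  by_cases hf0 : f =ᵐ[volume] 0
  · rw [lintegral_congr_ae (g := fun _ ↦ 0) (hf0.mono fun η hη ↦ by simp [hη]),
      lintegral_zero]
    exact zero_le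
  have hNp : eLpNorm f p volume ≠ 0 := mt (eLpNorm_eq_zero_iff hfp.1 hp0).1 hf0
  have hNq : eLpNorm f q volume ≠ 0 := mt (eLpNorm_eq_zero_iff hfq.1 hq0).1 hf0
  exact le_ofReal_add_mul_rpow_mul_rpow hNq hfq.2.ne hNp hfp.2.ne hA.le hB.le hγα hθ
    (hsplit f hfp.1 ξ)

/-- interpolation estimate `‖v‖_∞ ≤ C ‖w‖_p^θ ‖w‖_q^{1-θ}` for the
Biot-Savart velocity `v = K_{BS} ⋆ w`, where `1 ≤ p < 2 < q ≤ ∞` and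
`θ/p + (1-θ)/q = 1/2`. -/
theorem stmt3 (p q : ℝ≥0∞) (θ : ℝ) (hp : 1 ≤ p) (hp2 : p < 2) (hq : 2 < q)
    (hθ0 : 0 < θ) (hθ1 : θ < 1)
    (hpqθ : θ * (p⁻¹).toReal + (1 - θ) * (q⁻¹).toReal = 1 / 2) :
    ∃ C : ℝ, 0 < C ∧ ∀ w : E2 → ℝ, ∀ v : E2 → E2,
      MemLp w p volume → MemLp w q volume →
      (∀ ξ, v ξ = (2 * π)⁻¹ • ∫ η, (w η / ‖ξ - η‖ ^ 2) • perp (ξ - η)) →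
      MemLp v ⊤ volume ∧
        eLpNorm v ⊤ volume ≤
          ENNReal.ofReal C * eLpNorm w p volume ^ θ * eLpNorm w q volume ^ (1 - θ) := by
  obtain ⟨K, hK, hconv⟩ := exists_lintegral_mul_inv_norm_sub_le_rpow_mul_rpow hp hp2 hq hpqθ
  refine ⟨(2 * π)⁻¹ * K, by positivity, fun w v hwp hwq hv ↦ ?_⟩
  obtain rfl : v = biotSavart w := funext hv
  have hle : eLpNorm (biotSavart w) ⊤ volume ≤
      ENNReal.ofReal ((2 * π)⁻¹ * K) * eLpNorm w p volume ^ θ * eLpNorm w q volume ^ (1 - θ) := by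
    rw [eLpNorm_exponent_top, ENNReal.ofReal_mul (by positivity), mul_assoc, mul_assoc,
      ← mul_assoc (ENNReal.ofReal K)]
    exact essSup_le_of_ae_le _ <| .of_forall fun ξ ↦
      (enorm_biotSavart_le w ξ).trans (mul_le_mul_right (hconv w hwp hwq ξ) _)
  have hfin : ENNReal.ofReal ((2 * π)⁻¹ * K) *
      eLpNorm w p volume ^ θ * eLpNorm w q volume ^ (1 - θ) < ∞ := by
    have := hwp.eLpNorm_lt_top
    have := hwq.eLpNorm_lt_top
    finiteness
  exact ⟨⟨aestronglyMeasurable_biotSavart hwp.1, hle.trans_lt hfin⟩, hle⟩
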